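/- arXiv:math-ph/0011031 — 5 statements merged into one kernel-verified Lean document; each statement's English description precedes it below -/
import Mathlib

section
/- Let (E_m)_{m≥0} be a sequence of real numbers such that for every m ≥ 1: (a) E_m ≥ min{E_{m−1}, E_{m+1}}, and (b) if E_m ≥ E_{m−1} then E_m ≥ (E_{m−1} + E_{m+1})/2. Then there exists M ∈ ℕ ∪ {∞} such that E is nondecreasing and midpoint-concave on [0, M] and nonincreasing on [M, ∞). -/
private lemma pseudo_step (E : ℕ → ℝ)
    (h1 : ∀ m : ℕ, 1 ≤ m → min (E (m - 1)) (E (m + 1)) ≤ E m)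
    (h2 : ∀ m : ℕ, 1 ≤ m → E (m - 1) ≤ E m → (E (m - 1) + E (m + 1)) / 2 ≤ E m)
    (k : ℕ) (h : E (k + 1) ≤ E k) : E (k + 2) ≤ E (k + 1) := by
  rcases le_or_gt (E k) (E (k + 1)) with hle | hlt
  · have := h2 (k + 1) (by omega) (by simpa using hle)
    simp only [Nat.add_sub_cancel] at this
    linarith
  · have := h1 (k + 1) (by omega)
    simp only [Nat.add_sub_cancel] at this
    rcases min_le_iff.mp this with h' | h'
    · linarith
    · linarith

/-- Global pseudoconcavity: if a sequence satisfies
`E_m ≥ min{E_{m−1}, E_{m+1}}` and is midpoint-concave wherever it is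
nondecreasing, then there is an `M ∈ ℕ ∪ {∞}` such that the sequence is
nondecreasing and midpoint-concave on `[0, M]` and nonincreasing on `[M, ∞)`. -/
theorem global_pseudoconcavity (E : ℕ → ℝ)
    (h1 : ∀ m : ℕ, 1 ≤ m → min (E (m - 1)) (E (m + 1)) ≤ E m)
    (h2 : ∀ m : ℕ, 1 ≤ m → E (m - 1) ≤ E m → (E (m - 1) + E (m + 1)) / 2 ≤ E m) :
    ∃ M : ℕ∞,
      (∀ m : ℕ, ((m : ℕ∞) + 1) ≤ M → E m ≤ E (m + 1)) ∧
      (∀ m : ℕ, 1 ≤ m → ((m : ℕ∞) + 1) ≤ M → E (m - 1) + E (m + 1) ≤ 2 * E m) ∧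
      (∀ m : ℕ, M ≤ (m : ℕ∞) → E (m + 1) ≤ E m) := by
  by_cases hS : ∃ m, E (m + 1) < E m
  · set N := Nat.find hS with hN
    have hmono : ∀ m, m < N → E m ≤ E (m + 1) := fun m hm =>
      le_of_not_gt (Nat.find_min hS hm)
    refine ⟨(N : ℕ∞), ?_, ?_, ?_⟩
    · intro m hm
      have hm' : m + 1 ≤ N := by exact_mod_cast hm
      exact hmono m (by omega)
    · intro m hm1 hm
      have hm' : m + 1 ≤ N := by exact_mod_cast hm
      have hle : E (m - 1) ≤ E m := by
        have := hmono (m - 1) (by omega)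
        rwa [Nat.sub_add_cancel hm1] at this
      have := h2 m hm1 hle
      linarith
    · intro m hm
      have hm' : N ≤ m := by exact_mod_cast hm
      have key : ∀ d, E (N + d + 1) ≤ E (N + d) := by
        intro d
        induction d with
        | zero => simpa using (Nat.find_spec hS).le
        | succ d ih =>
          have := pseudo_step E h1 h2 (N + d) ih
          have e1 : N + (d + 1) + 1 = N + d + 2 := by omega
          have e2 : N + (d + 1) = N + d + 1 := by omega
          rw [e1, e2]; exact this
      obtain ⟨d, rfl⟩ := Nat.exists_eq_add_of_le hm'
      exact key d
  · push_neg at hS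
    refine ⟨⊤, ?_, ?_, ?_⟩
    · intro m _; exact hS m
    · intro m hm1 _
      have hle : E (m - 1) ≤ E m := by
        have := hS (m - 1)
        rwa [Nat.sub_add_cancel hm1] at this
      have := h2 m hm1 hle
      linarith
    · intro m hm
      exact absurd (top_le_iff.mp hm) (by simp)
end

section
/- Let (E_m)_{m≥0} be a sequence of real numbers and set Δ_m = E_m − E_{m−1} for m ≥ 1. Suppose that for all m ≥ 1 with E_m ≥ E_{m+1}, one has E_m ≥ (m E_{m−1} + (m+1) E_{m+1})/(2m+1), i.e. (m+1)Δ_{m+1} ≤ m Δ_m. Fix ℓ ≥ 0 with E_{ℓ+1} ≤ E_ℓ, and suppose E_k ≥ E_{k+1} for all k ≥ ℓ. Then for all m > ℓ one has E_m ≤ E_ℓ + (S_m − S_ℓ)(ℓ+1)(E_{ℓ+1} − E_ℓ), where S_m = Σ_{μ=1}^m 1/μ. -/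
/-!
The pseudoconcavity condition says that the weighted increments `(k+1)(E_{k+1} - E_k)` do not
increase along the decreasing part, so each increment `E_{k+1} - E_k` with `k ≥ ℓ` is at most
`(ℓ+1)(E_{ℓ+1} - E_ℓ) / (k+1)`. Summing from `ℓ` to `m - 1` gives the harmonic-number bound.
-/

/-- The `m`-th harmonic number `S_m = Σ_{μ=1}^m 1/μ` (with `S_0 = 0`). -/
noncomputable def harmonic' (m : ℕ) : ℝ := ∑ μ ∈ Finset.range m, 1 / ((μ : ℝ) + 1)

lemma harmonic'_succ (m : ℕ) : harmonic' (m + 1) = harmonic' m + 1 / ((m : ℝ) + 1) := by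
  simp [harmonic', Finset.sum_range_succ]

lemma antitoneOn_succ_mul_sub (E : ℕ → ℝ)
    (hpc : ∀ m : ℕ, 1 ≤ m → E (m + 1) ≤ E m →
      ((m : ℝ) + 1) * (E (m + 1) - E m) ≤ (m : ℝ) * (E m - E (m - 1)))
    {ℓ : ℕ} (hdec : ∀ k : ℕ, ℓ ≤ k → E (k + 1) ≤ E k) :
    AntitoneOn (fun k : ℕ ↦ ((k : ℝ) + 1) * (E (k + 1) - E k)) {k | ℓ ≤ k} :=
  antitoneOn_nat_Ici_of_succ_le fun n hn ↦ by
    simpa [Nat.add_sub_cancel] using hpc (n + 1) (by omega) (hdec (n + 1) (by omega))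

lemma antitoneOn_sub_harmonic'_mul (E : ℕ → ℝ) {ℓ : ℕ} {C : ℝ}
    (hE : ∀ k : ℕ, ℓ ≤ k → ((k : ℝ) + 1) * (E (k + 1) - E k) ≤ C) :
    AntitoneOn (fun k : ℕ ↦ E k - harmonic' k * C) {k | ℓ ≤ k} :=
  antitoneOn_nat_Ici_of_succ_le fun n hn ↦ by
    have hstep : E (n + 1) - E n ≤ 1 / ((n : ℝ) + 1) * C := by
      rw [one_div_mul_eq_div, le_div_iff₀ (by positivity), mul_comm]
      exact hE n hn
    rw [harmonic'_succ]
    linarith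

theorem tangent_bound_decreasing_general (E : ℕ → ℝ)
    (hpc : ∀ m : ℕ, 1 ≤ m → E (m + 1) ≤ E m →
      ((m : ℝ) + 1) * (E (m + 1) - E m) ≤ (m : ℝ) * (E m - E (m - 1)))
    (ℓ : ℕ) (hdec : ∀ k : ℕ, ℓ ≤ k → E (k + 1) ≤ E k) :
    ∀ m : ℕ, ℓ < m →
      E m ≤ E ℓ + (harmonic' m - harmonic' ℓ) * ((ℓ : ℝ) + 1) * (E (ℓ + 1) - E ℓ) := by
  intro m hm
  have hweighted : ∀ k : ℕ, ℓ ≤ k →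
      ((k : ℝ) + 1) * (E (k + 1) - E k) ≤ ((ℓ : ℝ) + 1) * (E (ℓ + 1) - E ℓ) :=
    fun k hk ↦ antitoneOn_succ_mul_sub E hpc hdec (le_refl ℓ) hk hk
  have hsum := antitoneOn_sub_harmonic'_mul E hweighted (le_refl ℓ) hm.le hm.le
  linear_combination hsum

/-- Logarithmic tangential bound in the decreasing part: under the
pseudoconcavity condition `(m+1)Δ_{m+1} ≤ m Δ_m` (whenever `E_m ≥ E_{m+1}`),
and if the sequence is nonincreasing from `ℓ` on with `E_{ℓ+1} ≤ E_ℓ`, then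
`E_m ≤ E_ℓ + (S_m − S_ℓ)(ℓ+1)(E_{ℓ+1} − E_ℓ)` for all `m > ℓ`. -/
theorem tangent_bound_decreasing (E : ℕ → ℝ)
    (hpc : ∀ m : ℕ, 1 ≤ m → E (m + 1) ≤ E m →
      ((m : ℝ) + 1) * (E (m + 1) - E m) ≤ (m : ℝ) * (E m - E (m - 1)))
    (ℓ : ℕ) (hdec0 : E (ℓ + 1) ≤ E ℓ) (hdec : ∀ k : ℕ, ℓ ≤ k → E (k + 1) ≤ E k) :
    ∀ m : ℕ, ℓ < m →
      E m ≤ E ℓ + (harmonic' m - harmonic' ℓ) * ((ℓ : ℝ) + 1) * (E (ℓ + 1) - E ℓ) :=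
  tangent_bound_decreasing_general E hpc ℓ hdec
end

section
/- Let (E_m)_{m≥0} be a sequence of real numbers satisfying: for every m ≥ 1, if E_m ≥ E_{m+1} then (m+1)(E_{m+1} − E_m) ≤ m(E_m − E_{m−1}); and for every m ≥ 1, E_m ≥ min{E_{m−1}, E_{m+1}}. If there exists some m ≥ 1 with E_{m+1} < E_m, then E_m → −∞ as m → ∞. Consequently, if E is bounded below, then E is nondecreasing. -/
/-- Either no decrease or infinite decrease: under the pseudoconcavity
conditions, once the sequence strictly decreases it tends to `−∞`;
consequently, if it is bounded below it is nondecreasing. -/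
theorem no_decrease_or_infinite_decrease (E : ℕ → ℝ)
    (hpc : ∀ m : ℕ, 1 ≤ m → E (m + 1) ≤ E m →
      ((m : ℝ) + 1) * (E (m + 1) - E m) ≤ (m : ℝ) * (E m - E (m - 1)))
    (hmin : ∀ m : ℕ, 1 ≤ m → min (E (m - 1)) (E (m + 1)) ≤ E m) :
    ((∃ m : ℕ, 1 ≤ m ∧ E (m + 1) < E m) →
        Filter.Tendsto E Filter.atTop Filter.atBot) ∧
    (BddBelow (Set.range E) → Monotone E) := by
  have main : (∃ m : ℕ, 1 ≤ m ∧ E (m + 1) < E m) →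
      Filter.Tendsto E Filter.atTop Filter.atBot := by
    rintro ⟨m₀, hm₀, hdec⟩
    set c : ℝ := ((m₀ : ℝ) + 1) * (E m₀ - E (m₀ + 1)) with hc
    have hcpos : 0 < c := by
      apply mul_pos
      · positivity
      · linarith
    -- key decreasing estimate
    have key : ∀ k, m₀ ≤ k → ((k : ℝ) + 1) * (E (k + 1) - E k) ≤ -c := by
      intro k hk
      induction k, hk using Nat.le_induction with
      | base => rw [hc]; ring_nf; linarith
      | succ n hn ih =>
        have hn1 : 1 ≤ n := le_trans hm₀ hn
        have hpos : (0 : ℝ) < (n : ℝ) + 1 := by positivity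
        have hdrop : E (n + 1) < E n := by nlinarith
        have h2 : E (n + 2) ≤ E (n + 1) := by
          have h := hmin (n + 1) (by omega)
          simp only [Nat.add_sub_cancel] at h
          rcases min_le_iff.mp h with h' | h'
          · linarith
          · exact h'
        have h3 := hpc (n + 1) (by omega) h2
        simp only [Nat.add_sub_cancel] at h3
        push_cast at h3 ⊢
        have : ((n : ℝ) + 1) * (E (n + 1) - E n) ≤ -c := ih
        calc ((n : ℝ) + 1 + 1) * (E (n + 1 + 1) - E (n + 1))
            ≤ ((n : ℝ) + 1) * (E (n + 1) - E n) := by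
              convert h3 using 3
          _ ≤ -c := ih
    -- harmonic sums
    set H : ℕ → ℝ := fun n => ∑ i ∈ Finset.range n, (1 : ℝ) / (i + 1) with hH
    have bound : ∀ n, m₀ ≤ n → E n ≤ E m₀ - c * (H n - H m₀) := by
      intro n hn
      induction n, hn using Nat.le_induction with
      | base => simp
      | succ n hn ih =>
        have hpos : (0 : ℝ) < (n : ℝ) + 1 := by positivity
        have hstep : E (n + 1) - E n ≤ -c / ((n : ℝ) + 1) := by
          rw [le_div_iff₀ hpos]
          nlinarith [key n hn]
        have hHs : H (n + 1) = H n + 1 / ((n : ℝ) + 1) := by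
          simp [hH, Finset.sum_range_succ]
        have hrw : c * (1 / ((n : ℝ) + 1)) = -(-c / ((n : ℝ) + 1)) := by ring
        rw [hHs]
        nlinarith [hstep, ih]
    have hHtop : Filter.Tendsto H Filter.atTop Filter.atTop := by
      simpa [hH] using Real.tendsto_sum_range_one_div_nat_succ_atTop
    have hcH : Filter.Tendsto (fun n => c * H n) Filter.atTop Filter.atTop :=
      hHtop.const_mul_atTop hcpos
    have hRHS : Filter.Tendsto (fun n => E m₀ - c * (H n - H m₀))
        Filter.atTop Filter.atBot := by
      have hneg : Filter.Tendsto (fun n => -(c * H n)) Filter.atTop Filter.atBot :=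
        Filter.tendsto_neg_atBot_iff.mpr hcH
      have := Filter.tendsto_atBot_add_const_left Filter.atTop (E m₀ + c * H m₀)
        hneg
      refine this.congr (fun n => by ring)
    refine Filter.tendsto_atBot_mono' Filter.atTop ?_ hRHS
    filter_upwards [Filter.eventually_ge_atTop m₀] with n hn
    exact bound n hn
  refine ⟨main, ?_⟩
  intro hbdd
  obtain ⟨b, hb⟩ := hbdd
  have hble : ∀ n, b ≤ E n := fun n => hb (Set.mem_range_self n)
  have noDec : ¬ ∃ m : ℕ, 1 ≤ m ∧ E (m + 1) < E m := by
    intro h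
    have htend := main h
    obtain ⟨n, hn⟩ := (Filter.tendsto_atBot.mp htend (b - 1)).exists
    linarith [hble n]
  apply monotone_nat_of_le_succ
  intro n
  by_contra hlt
  push_neg at hlt
  rcases Nat.eq_zero_or_pos n with rfl | hpos
  · -- n = 0 : E 1 < E 0
    have h := hmin 1 le_rfl
    simp only [Nat.sub_self] at h
    have h2 : E 2 ≤ E 1 := by
      rcases min_le_iff.mp h with h' | h'
      · linarith
      · exact h'
    have h3 := hpc 1 le_rfl h2
    norm_num at h3
    have : E (1 + 1) < E 1 := by
      have : E 2 < E 1 := by nlinarith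
      simpa using this
    exact noDec ⟨1, le_rfl, this⟩
  · exact noDec ⟨n, hpos, hlt⟩
end

section
/- Let V: ℝ³ → ℝ be smooth, radially symmetric about the z-axis (V = V(r_⊥, z) with r_⊥ = √(x²+y²)), H = −Δ − B L_z + (B²/4)r_⊥² + V, and x_+ = x + iy. Then the operator identity [H, [H, x_+]] + 2B[H, x_+] = 2(x_+/r_⊥)(∂V/∂r_⊥) holds on smooth functions supported away from the z-axis. -/
open Complex

/-- Partial derivative in direction `i` of a function on `ℝ³`. -/
noncomputable def pd (i : Fin 3) (f : EuclideanSpace ℝ (Fin 3) → ℂ) :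
    EuclideanSpace ℝ (Fin 3) → ℂ :=
  fun x => fderiv ℝ f x (EuclideanSpace.single i 1)

/-- The Laplacian on `ℝ³`. -/
noncomputable def lap (f : EuclideanSpace ℝ (Fin 3) → ℂ) :
    EuclideanSpace ℝ (Fin 3) → ℂ :=
  fun x => pd 0 (pd 0 f) x + pd 1 (pd 1 f) x + pd 2 (pd 2 f) x

/-- The angular momentum operator `L_z = −i(x∂/∂y − y∂/∂x)`. -/
noncomputable def Lz (f : EuclideanSpace ℝ (Fin 3) → ℂ) :
    EuclideanSpace ℝ (Fin 3) → ℂ :=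
  fun x => -I * ((x 0 : ℂ) * pd 1 f x - (x 1 : ℂ) * pd 0 f x)

/-- The Hamiltonian `H = −Δ − B L_z + (B²/4) r_⊥² + V`. -/
noncomputable def HV (B : ℝ) (V : EuclideanSpace ℝ (Fin 3) → ℝ)
    (f : EuclideanSpace ℝ (Fin 3) → ℂ) : EuclideanSpace ℝ (Fin 3) → ℂ :=
  fun x => -lap f x - (B : ℂ) * Lz f x
    + ((B^2/4 : ℝ) : ℂ) * (((x 0)^2 + (x 1)^2 : ℝ) : ℂ) * f x + (V x : ℂ) * f x

/-- The multiplication operator by `x₊ = x + iy`. -/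
noncomputable def Xp (f : EuclideanSpace ℝ (Fin 3) → ℂ) :
    EuclideanSpace ℝ (Fin 3) → ℂ :=
  fun x => ((x 0 : ℂ) + I * (x 1 : ℂ)) * f x

/-- The commutator `[H, x₊]`. -/
noncomputable def commHXp (B : ℝ) (V : EuclideanSpace ℝ (Fin 3) → ℝ)
    (f : EuclideanSpace ℝ (Fin 3) → ℂ) : EuclideanSpace ℝ (Fin 3) → ℂ :=
  fun x => HV B V (Xp f) x - Xp (HV B V f) x

noncomputable section
abbrev E3 := EuclideanSpace ℝ (Fin 3)

@[fun_prop] lemma contDiff_coordR (i : Fin 3) : ContDiff ℝ (⊤ : ℕ∞) (fun x : E3 => x i) :=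
  (EuclideanSpace.proj i : E3 →L[ℝ] ℝ).contDiff
@[fun_prop] lemma contDiff_ofReal' : ContDiff ℝ (⊤ : ℕ∞) Complex.ofReal := Complex.ofRealCLM.contDiff

@[fun_prop]
lemma pd_contDiff (i : Fin 3) (f : E3 → ℂ) (hf : ContDiff ℝ (⊤ : ℕ∞) f) : ContDiff ℝ (⊤ : ℕ∞) (pd i f) := by
  unfold pd
  exact (ContinuousLinearMap.apply ℝ ℂ (EuclideanSpace.single i 1)).contDiff.comp
    (hf.fderiv_right (m := (⊤ : ℕ∞)) (by simp))

section pdrules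
variable {f g : E3 → ℂ} {x : E3} {i j : Fin 3} {c : ℂ}

private lemma da (hf : ContDiff ℝ (⊤ : ℕ∞) f) : DifferentiableAt ℝ f x :=
  (hf.differentiable (by simp)).differentiableAt

lemma pd_add (hf : ContDiff ℝ (⊤ : ℕ∞) f) (hg : ContDiff ℝ (⊤ : ℕ∞) g) :
    pd i (fun y => f y + g y) = fun x => pd i f x + pd i g x := by
  funext x; simp [pd, fderiv_fun_add (da hf) (da hg)]

lemma pd_sub (hf : ContDiff ℝ (⊤ : ℕ∞) f) (hg : ContDiff ℝ (⊤ : ℕ∞) g) :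
    pd i (fun y => f y - g y) = fun x => pd i f x - pd i g x := by
  funext x; simp [pd, fderiv_fun_sub (da hf) (da hg)]

lemma pd_neg : pd i (fun y => -f y) = fun x => -pd i f x := by
  funext x; simp [pd, fderiv_neg]

lemma pd_const : pd i (fun _ => c) = fun _ => 0 := by funext x; simp [pd]

lemma pd_mul (hf : ContDiff ℝ (⊤ : ℕ∞) f) (hg : ContDiff ℝ (⊤ : ℕ∞) g) :
    pd i (fun y => f y * g y) = fun x => pd i f x * g x + f x * pd i g x := by
  funext x
  simp only [pd, fderiv_fun_mul (da hf) (da hg), ContinuousLinearMap.add_apply,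
    ContinuousLinearMap.smul_apply, smul_eq_mul]
  ring

lemma pd_const_mul (hf : ContDiff ℝ (⊤ : ℕ∞) f) :
    pd i (fun y => c * f y) = fun x => c * pd i f x := by
  funext x; simp [pd, fderiv_const_mul (da hf)]

lemma pd_coordC : pd i (fun y : E3 => (y j : ℂ)) = fun _ => if j = i then 1 else 0 := by
  funext x
  have : (fun y : E3 => (y j : ℂ)) = Complex.ofRealCLM ∘ (EuclideanSpace.proj j) := rfl
  simp only [pd, this, fderiv_comp x (Complex.ofRealCLM.differentiableAt)
    ((EuclideanSpace.proj j).differentiableAt), ContinuousLinearMap.fderiv]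
  simp [EuclideanSpace.proj, EuclideanSpace.single_apply, apply_ite Complex.ofReal]

lemma pd_ofReal (g : E3 → ℝ) (hg : DifferentiableAt ℝ g x) :
    pd i (fun y => (g y : ℂ)) x = ((fderiv ℝ g x (EuclideanSpace.single i 1) : ℝ) : ℂ) := by
  have hco : (fun y : E3 => (g y : ℂ)) = Complex.ofRealCLM ∘ g := rfl
  simp only [pd, hco, fderiv_comp x Complex.ofRealCLM.differentiableAt hg,
    ContinuousLinearMap.fderiv]
  simp

lemma pd_comm_pt (hg : ContDiff ℝ (⊤ : ℕ∞) g) : pd i (pd j g) x = pd j (pd i g) x := by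
  have hd : ∀ y, HasFDerivAt g (fderiv ℝ g y) y :=
    fun y => (hg.differentiable (by simp) y).hasFDerivAt
  have h2 : HasFDerivAt (fderiv ℝ g) (fderiv ℝ (fderiv ℝ g) x) x :=
    (((hg.fderiv_right (m := (⊤ : ℕ∞)) (by simp)).differentiable (by simp)) x).hasFDerivAt
  have hsymm := second_derivative_symmetric hd h2 (EuclideanSpace.single j 1)
    (EuclideanSpace.single i 1)
  have key : ∀ (k : Fin 3) (u : E3), pd k (fun y => fderiv ℝ g y u) x
      = fderiv ℝ (fderiv ℝ g) x (EuclideanSpace.single k 1) u := by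
    intro k u
    have : (fun y => fderiv ℝ g y u) = (ContinuousLinearMap.apply ℝ ℂ u) ∘ (fderiv ℝ g) := rfl
    rw [pd, this, fderiv_comp x (ContinuousLinearMap.apply ℝ ℂ u).differentiableAt
      ((hg.fderiv_right (m := (⊤ : ℕ∞)) (by simp)).differentiable (by simp) x)]
    simp
  calc pd i (pd j g) x = fderiv ℝ (fderiv ℝ g) x (EuclideanSpace.single i 1)
        (EuclideanSpace.single j 1) := key i _
    _ = fderiv ℝ (fderiv ℝ g) x (EuclideanSpace.single j 1) (EuclideanSpace.single i 1) :=
        hsymm.symm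
    _ = pd j (pd i g) x := (key j _).symm

lemma pd_comm10 (hg : ContDiff ℝ (⊤ : ℕ∞) g) : pd 1 (pd 0 g) = pd 0 (pd 1 g) :=
  funext fun _ => pd_comm_pt hg
lemma pd_comm20 (hg : ContDiff ℝ (⊤ : ℕ∞) g) : pd 2 (pd 0 g) = pd 0 (pd 2 g) :=
  funext fun _ => pd_comm_pt hg
lemma pd_comm21 (hg : ContDiff ℝ (⊤ : ℕ∞) g) : pd 2 (pd 1 g) = pd 1 (pd 2 g) :=
  funext fun _ => pd_comm_pt hg

end pdrules

lemma Xp_def (f : E3 → ℂ) : Xp f = fun x => ((x 0 : ℂ) + I * (x 1 : ℂ)) * f x := rfl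
lemma lap_def (f : E3 → ℂ) :
    lap f = fun x => pd 0 (pd 0 f) x + pd 1 (pd 1 f) x + pd 2 (pd 2 f) x := rfl
lemma Lz_def (f : E3 → ℂ) :
    Lz f = fun x => -I * ((x 0 : ℂ) * pd 1 f x - (x 1 : ℂ) * pd 0 f x) := rfl
lemma HV_def (B : ℝ) (V : E3 → ℝ) (f : E3 → ℂ) : HV B V f = fun x => -lap f x - (B : ℂ) * Lz f x
    + ((B^2/4 : ℝ) : ℂ) * (((x 0)^2 + (x 1)^2 : ℝ) : ℂ) * f x + (V x : ℂ) * f x := rfl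

def Aop (B : ℝ) (f : E3 → ℂ) : E3 → ℂ :=
  fun x => -2 * (pd 0 f x + I * pd 1 f x) - (B : ℂ) * (((x 0 : ℂ) + I * (x 1 : ℂ)) * f x)

lemma Aop_def (B : ℝ) (f : E3 → ℂ) : Aop B f
    = fun x => -2 * (pd 0 f x + I * pd 1 f x)
      - (B : ℂ) * (((x 0 : ℂ) + I * (x 1 : ℂ)) * f x) := rfl

lemma contDiff_HV (B : ℝ) (V : E3 → ℝ) (hV : ContDiff ℝ (⊤ : ℕ∞) V) (f : E3 → ℂ)
    (hf : ContDiff ℝ (⊤ : ℕ∞) f) : ContDiff ℝ (⊤ : ℕ∞) (HV B V f) := by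
  rw [HV_def, lap_def, Lz_def]
  fun_prop

lemma commA (B : ℝ) (V : E3 → ℝ) (f : E3 → ℂ) (hf : ContDiff ℝ (⊤ : ℕ∞) f) (x : E3) :
    commHXp B V f x = Aop B f x := by
  simp (disch := fun_prop) only [commHXp, Aop, HV_def, lap_def, Lz_def, Xp_def,
    Complex.ofReal_add, Complex.ofReal_pow, Complex.ofReal_div, Complex.ofReal_ofNat,
    Complex.ofReal_mul, pow_two,
    pd_add, pd_sub, pd_neg, pd_const, pd_mul, pd_const_mul, pd_coordC, reduceIte, Fin.reduceEq]
  ring_nf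
  simp only [Complex.I_sq]
  ring_nf

lemma key_identity (B : ℝ) (V : E3 → ℝ) (hV : ContDiff ℝ (⊤ : ℕ∞) V) (f : E3 → ℂ)
    (hf : ContDiff ℝ (⊤ : ℕ∞) f) (x : E3) :
    HV B V (Aop B f) x - Aop B (HV B V f) x + (2 * B : ℂ) * Aop B f x
      = 2 * (pd 0 (fun y => (V y : ℂ)) x + I * pd 1 (fun y => (V y : ℂ)) x) * f x := by
  simp (disch := fun_prop) only [HV_def, lap_def, Lz_def, Xp_def, Aop_def, Complex.ofReal_add,
    Complex.ofReal_pow, Complex.ofReal_div, Complex.ofReal_ofNat, Complex.ofReal_mul, pow_two,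
    pd_add, pd_sub, pd_neg, pd_const, pd_mul, pd_const_mul, pd_coordC, reduceIte, Fin.reduceEq,
    pd_comm10, pd_comm20, pd_comm21]
  ring_nf
  simp only [Complex.I_sq]
  ring_nf

lemma fderiv_V_eval (V : E3 → ℝ) (W : ℝ → ℝ → ℝ) (hW : ContDiff ℝ (⊤ : ℕ∞) (Function.uncurry W))
    (hVW : ∀ x : E3, V x = W (Real.sqrt ((x 0)^2 + (x 1)^2)) (x 2))
    (x : E3) (h : 0 < (x 0)^2 + (x 1)^2) (i : Fin 3) (hi : i = 0 ∨ i = 1) :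
    fderiv ℝ V x (EuclideanSpace.single i 1)
      = (x i / Real.sqrt ((x 0)^2 + (x 1)^2))
        * deriv (fun s => W s (x 2)) (Real.sqrt ((x 0)^2 + (x 1)^2)) := by
  set r := Real.sqrt ((x 0)^2 + (x 1)^2) with hr
  have hq : (x 0)^2 + (x 1)^2 ≠ 0 := ne_of_gt h
  have hrpos : 0 < r := Real.sqrt_pos.2 h
  have hp0 : HasFDerivAt (fun y : E3 => y 0) (EuclideanSpace.proj (0:Fin 3) : E3 →L[ℝ] ℝ) x := by
    have h := (EuclideanSpace.proj (0:Fin 3) : E3 →L[ℝ] ℝ).hasFDerivAt (x := x)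
    exact h.congr_of_eventuallyEq (Filter.Eventually.of_forall fun y => rfl)
  have hp1 : HasFDerivAt (fun y : E3 => y 1) (EuclideanSpace.proj (1:Fin 3) : E3 →L[ℝ] ℝ) x := by
    have h := (EuclideanSpace.proj (1:Fin 3) : E3 →L[ℝ] ℝ).hasFDerivAt (x := x)
    exact h.congr_of_eventuallyEq (Filter.Eventually.of_forall fun y => rfl)
  have hp2 : HasFDerivAt (fun y : E3 => y 2) (EuclideanSpace.proj (2:Fin 3) : E3 →L[ℝ] ℝ) x := by
    have h := (EuclideanSpace.proj (2:Fin 3) : E3 →L[ℝ] ℝ).hasFDerivAt (x := x)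
    exact h.congr_of_eventuallyEq (Filter.Eventually.of_forall fun y => rfl)
  set Lq : E3 →L[ℝ] ℝ :=
    (x 0 • (EuclideanSpace.proj (0:Fin 3) : E3 →L[ℝ] ℝ)
        + x 0 • (EuclideanSpace.proj (0:Fin 3) : E3 →L[ℝ] ℝ))
      + (x 1 • (EuclideanSpace.proj (1:Fin 3) : E3 →L[ℝ] ℝ)
        + x 1 • (EuclideanSpace.proj (1:Fin 3) : E3 →L[ℝ] ℝ)) with hLq
  have hq' : HasFDerivAt (fun y : E3 => (y 0)^2 + (y 1)^2) Lq x := by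
    have h0 := hp0.fun_mul hp0
    have h1 := hp1.fun_mul hp1
    have := h0.fun_add h1
    simpa [hLq, pow_two] using this
  have hsq : HasDerivAt Real.sqrt (1 / (2 * r)) ((x 0)^2 + (x 1)^2) :=
    Real.hasDerivAt_sqrt hq
  have hrd : HasFDerivAt (fun y : E3 => Real.sqrt ((y 0)^2 + (y 1)^2))
      ((1 / (2 * r)) • Lq) x := hsq.comp_hasFDerivAt x hq'
  set Lg : E3 →L[ℝ] ℝ × ℝ :=
    ((1 / (2 * r)) • Lq).prod (EuclideanSpace.proj (2:Fin 3) : E3 →L[ℝ] ℝ) with hLg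
  have hg : HasFDerivAt (fun y : E3 => (Real.sqrt ((y 0)^2 + (y 1)^2), y 2)) Lg x := hrd.prodMk hp2
  set D := fderiv ℝ (Function.uncurry W) (r, x 2) with hD
  have hWd : HasFDerivAt (Function.uncurry W) D (r, x 2) :=
    ((hW.differentiable (by simp)) (r, x 2)).hasFDerivAt
  have hVeq : V = (Function.uncurry W) ∘ (fun y : E3 => (Real.sqrt ((y 0)^2 + (y 1)^2), y 2)) :=
    funext fun y => hVW y
  have hV' : HasFDerivAt V (D.comp Lg) x := by
    rw [hVeq]; exact hWd.comp x hg
  rw [hV'.fderiv]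
  have hsingle : ∀ (j k : Fin 3), (EuclideanSpace.single j (1:ℝ)) k = if k = j then 1 else 0 :=
    fun j k => EuclideanSpace.single_apply j 1 k
  have hDone : D (1, 0) = deriv (fun s => W s (x 2)) r := by
    have h1 : HasDerivAt (fun s : ℝ => (s, x 2)) ((1:ℝ), (0:ℝ)) r :=
      (hasDerivAt_id r).prodMk (hasDerivAt_const r (x 2))
    have h2 : HasDerivAt (fun s : ℝ => W s (x 2)) (D (1, 0)) r := by
      have := hWd.comp_hasDerivAt r h1; exact this
    exact h2.deriv.symm
  have heval : Lg (EuclideanSpace.single i 1) = ((x i / r) • ((1:ℝ), (0:ℝ)) : ℝ × ℝ) := by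
    have hrne : r ≠ 0 := ne_of_gt hrpos
    rcases hi with rfl | rfl <;>
    · simp [hLg, hLq, ContinuousLinearMap.prod_apply, hsingle, Prod.ext_iff]
      field_simp
      ring
  rw [ContinuousLinearMap.comp_apply, heval, map_smul, hDone]
  simp [smul_eq_mul]

end

/-- The 'acceleration' identity
`[H, [H, x₊]] + 2B [H, x₊] = 2 (x₊/r_⊥)(∂V/∂r_⊥)` on smooth functions
supported away from the `z`-axis, for axially symmetric smooth potentials. -/
theorem acceleration_identity (B : ℝ) (hB : 0 < B)
    (V : EuclideanSpace ℝ (Fin 3) → ℝ) (hV : ContDiff ℝ (⊤ : ℕ∞) V)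
    (W : ℝ → ℝ → ℝ) (hW : ContDiff ℝ (⊤ : ℕ∞) (Function.uncurry W))
    (hVW : ∀ x : EuclideanSpace ℝ (Fin 3),
      V x = W (Real.sqrt ((x 0)^2 + (x 1)^2)) (x 2))
    (f : EuclideanSpace ℝ (Fin 3) → ℂ) (hf : ContDiff ℝ (⊤ : ℕ∞) f)
    (hsupp : ∀ x ∈ tsupport f, 0 < (x 0)^2 + (x 1)^2) :
    ∀ x : EuclideanSpace ℝ (Fin 3),
      HV B V (commHXp B V f) x - commHXp B V (HV B V f) x
          + (2 * B : ℂ) * commHXp B V f x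
        = 2 * (((x 0 : ℂ) + I * (x 1 : ℂ)) /
              ((Real.sqrt ((x 0)^2 + (x 1)^2) : ℝ) : ℂ)) *
            ((deriv (fun r => W r (x 2)) (Real.sqrt ((x 0)^2 + (x 1)^2)) : ℝ) : ℂ)
            * f x := by
  intro x
  have e1 : commHXp B V f = Aop B f := funext fun y => commA B V f hf y
  have e2 : commHXp B V (HV B V f) x = Aop B (HV B V f) x :=
    commA B V (HV B V f) (contDiff_HV B V hV f hf) x
  rw [e1, e2, key_identity B V hV f hf x]
  by_cases hfx : f x = 0
  · rw [hfx]; ring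
  · have hx : x ∈ tsupport f := subset_tsupport f hfx
    have h : 0 < (x 0)^2 + (x 1)^2 := hsupp x hx
    have hVd : DifferentiableAt ℝ V x := (hV.differentiable (by simp)).differentiableAt
    rw [pd_ofReal V hVd, pd_ofReal V hVd,
      fderiv_V_eval V W hW hVW x h 0 (Or.inl rfl), fderiv_V_eval V W hW hVW x h 1 (Or.inr rfl)]
    have hrpos : 0 < Real.sqrt ((x 0)^2 + (x 1)^2) := Real.sqrt_pos.2 h
    have hrne : ((Real.sqrt ((x 0)^2 + (x 1)^2) : ℝ) : ℂ) ≠ 0 :=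
      Complex.ofReal_ne_zero.2 (ne_of_gt hrpos)
    push_cast
    field_simp
end

section
/- Let E_{m−1}, E_m, E_{m+1} be real numbers, m ≥ 1 an integer, and suppose there exists a sequence of nonnegative reals t_k ≥ m such that limsup_k [(E_{m−1} − E_m) t_k + (E_{m+1} − E_m)(t_k + 1)] < 0. Then: (i) E_m > min{E_{m−1}, E_{m+1}}; (ii) if E_m ≥ E_{m−1} and E_m ≤ E_{m+1} then E_m > (E_{m−1}+E_{m+1})/2; (iii) if E_m ≥ E_{m+1} then E_m > (m E_{m−1} + (m+1) E_{m+1})/(2m+1). -/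
/-- Real-analytic deduction in the pseudoconcavity proof: if `t_k ≥ m` and
`limsup [(E_{m−1} − E_m)t_k + (E_{m+1} − E_m)(t_k + 1)] < 0`, then
(i) `E_m > min{E_{m−1}, E_{m+1}}`;
(ii) if `E_m ≥ E_{m−1}` and `E_m ≤ E_{m+1}` then `E_m > (E_{m−1}+E_{m+1})/2`;
(iii) if `E_m ≥ E_{m+1}` then `E_m > (m E_{m−1} + (m+1) E_{m+1})/(2m+1)`. -/
theorem pseudoconcavity_deduction (Em1 Em Ep1 : ℝ) (m : ℕ) (hm : 1 ≤ m)
    (t : ℕ → ℝ) (ht : ∀ k, (m : ℝ) ≤ t k)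
    (hlim : Filter.limsup
      (fun k => (Em1 - Em) * t k + (Ep1 - Em) * (t k + 1)) Filter.atTop < 0) :
    (min Em1 Ep1 < Em) ∧
    (Em1 ≤ Em → Em ≤ Ep1 → (Em1 + Ep1) / 2 < Em) ∧
    (Ep1 ≤ Em →
      ((m : ℝ) * Em1 + ((m : ℝ) + 1) * Ep1) / (2 * (m : ℝ) + 1) < Em) := by
  set f : ℕ → ℝ := fun k => (Em1 - Em) * t k + (Ep1 - Em) * (t k + 1) with hf
  -- extract a single index with f k < 0
  have hk : ∃ k, f k < 0 := by
    by_cases hb : Filter.IsBoundedUnder (· ≤ ·) Filter.atTop f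
    · have := Filter.eventually_lt_of_limsup_lt hlim hb
      exact (this.exists)
    · exfalso
      have hset : {a : ℝ | ∀ᶠ n in Filter.atTop, f n ≤ a} = ∅ := by
        ext a
        simp only [Set.mem_setOf_eq, Set.mem_empty_iff_false, iff_false]
        intro h
        exact hb ⟨a, h⟩
      have : Filter.limsup f Filter.atTop = 0 := by
        rw [Filter.limsup_eq, hset, Real.sInf_empty]
      rw [this] at hlim
      exact lt_irrefl _ hlim
  obtain ⟨k, hk⟩ := hk
  have htk : (m : ℝ) ≤ t k := ht k
  have hm1 : (1 : ℝ) ≤ (m : ℝ) := by exact_mod_cast hm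
  have hfk : (Em1 - Em) * t k + (Ep1 - Em) * (t k + 1) < 0 := hk
  refine ⟨?_, ?_, ?_⟩
  · by_contra h
    push_neg at h
    rw [le_min_iff] at h
    nlinarith [h.1, h.2, htk, hm1]
  · intro h1 h2
    nlinarith [htk, hm1]
  · intro h1
    have hpos : (0:ℝ) < 2 * (m:ℝ) + 1 := by linarith
    rw [div_lt_iff₀ hpos]
    rcases le_or_gt 0 ((Em1 - Em) + (Ep1 - Em)) with hab | hab
    · nlinarith [htk, hm1]
    · nlinarith [htk, hm1]
end
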